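/- Let ρ be a Hermitian 2^n × 2^n matrix with Tr(ρ) = 1. Define the Dirac operators d_j = (c_{2j−1} + i c_{2j})/2 for 1 ≤ j ≤ n, and let D be the 2n × 2n complex matrix given in block form by D = [[A, B], [B̃, Ã]], where A_{jk} = Tr(ρ d_j† d_k), B_{jk} = Tr(ρ d_j d_k), B̃_{jk} = Tr(ρ d_j† d_k†), and Ã_{jk} = Tr(ρ d_j d_k†). Then the dynamical-Lie-algebra purity P₂(ρ) = 2^{−n} Σ_{1 ≤ μ < ν ≤ 2n} |Tr(ρ c_μ c_ν)|² satisfies P₂(ρ) = (2 Tr(D²) − n) / 2^n; equivalently, P₂(ρ) = (n − S₂(ρ)) / 2^n where S₂(ρ) := 2 Tr(D(I − D)) is the linear-entropy fermionic entanglement measure of ρ. -/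

import Mathlib

open Matrix Complex
open scoped Kronecker

noncomputable section

abbrev QIdx (n : ℕ) := Fin n → Fin 2
abbrev NMat (n : ℕ) := Matrix (QIdx n) (QIdx n) ℂ
abbrev NMat2 (n : ℕ) := Matrix (QIdx n × QIdx n) (QIdx n × QIdx n) ℂ

/-- The 2×2 Pauli X matrix. -/
def σX : Matrix (Fin 2) (Fin 2) ℂ := !![0, 1; 1, 0]
/-- The 2×2 Pauli Y matrix. -/
def σY : Matrix (Fin 2) (Fin 2) ℂ := !![0, -Complex.I; Complex.I, 0]
/-- The 2×2 Pauli Z matrix. -/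
def σZ : Matrix (Fin 2) (Fin 2) ℂ := !![1, 0; 0, -1]

/-- Tensor (Kronecker) product of `n` one-qubit matrices, realized on index type `Fin n → Fin 2`. -/
def tensor {n : ℕ} (M : Fin n → Matrix (Fin 2) (Fin 2) ℂ) : NMat n :=
  Matrix.of fun f g => ∏ i, M i (f i) (g i)

/-- The Jordan–Wigner Majorana operator `c_μ` (0-based index: `c_{2i} = Z^{⊗i} X I…`,
`c_{2i+1} = Z^{⊗i} Y I…`). -/
def majorana (n : ℕ) (μ : Fin (2 * n)) : NMat n :=
  tensor fun j =>
    if (j : ℕ) < (μ : ℕ) / 2 then σZ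
    else if (j : ℕ) = (μ : ℕ) / 2 then (if (μ : ℕ) % 2 = 0 then σX else σY)
    else 1

/-- Ordered product `c^s` of the Majorana operators indexed by a subset `s`. -/
def cProd (n : ℕ) (s : Finset (Fin (2 * n))) : NMat n :=
  ((s.sort (· ≤ ·)).map (majorana n)).prod

/-- The module `B_κ`: the complex span of products of `κ` distinct Majoranas. -/
def Bspace (n κ : ℕ) : Submodule ℂ (NMat n) :=
  Submodule.span ℂ {M | ∃ s : Finset (Fin (2 * n)), s.card = κ ∧ M = cProd n s}

/-- The Pauli string with `Z` on qubit `j` and identity elsewhere. -/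
def pauliZ (n : ℕ) (j : Fin n) : NMat n := tensor fun k => if k = j then σZ else 1

/-- The Pauli string with `X` on qubits `j` and `j+1` and identity elsewhere. -/
def pauliXX (n : ℕ) (j : Fin n) : NMat n :=
  tensor fun k => if (k : ℕ) = (j : ℕ) ∨ (k : ℕ) = (j : ℕ) + 1 then σX else 1

/-- The parity operator `P = Z^{⊗n}`. -/
def parity (n : ℕ) : NMat n := tensor fun _ => σZ


/-- The Dirac fermionic operator `d_j = (c_{2j−1} + i c_{2j})/2` (0-based indexing). -/
def dirac (n : ℕ) (j : Fin n) : NMat n :=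
  (2 : ℂ)⁻¹ • (majorana n ⟨2 * (j : ℕ), by have := j.isLt; omega⟩ +
    Complex.I • majorana n ⟨2 * (j : ℕ) + 1, by have := j.isLt; omega⟩)

/-- The extended one-body reduced density matrix
`D = [[⟨d† d⟩, ⟨d d⟩], [⟨d† d†⟩, ⟨d d†⟩]]` of a state `ρ`. -/
def Dmat (n : ℕ) (ρ : NMat n) : Matrix (Fin n ⊕ Fin n) (Fin n ⊕ Fin n) ℂ :=
  Matrix.fromBlocks
    (Matrix.of fun j k => Matrix.trace (ρ * ((dirac n j)ᴴ * dirac n k)))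
    (Matrix.of fun j k => Matrix.trace (ρ * (dirac n j * dirac n k)))
    (Matrix.of fun j k => Matrix.trace (ρ * ((dirac n j)ᴴ * (dirac n k)ᴴ)))
    (Matrix.of fun j k => Matrix.trace (ρ * (dirac n j * (dirac n k)ᴴ)))

/-- The Lie-algebra purity `P₂(ρ) = 2^{−n} Σ_{μ<ν} |Tr(ρ c_μ c_ν)|²`. -/
def gPurity (n : ℕ) (ρ : NMat n) : ℝ :=
  (2 ^ n : ℝ)⁻¹ * ∑ μ : Fin (2 * n), ∑ ν : Fin (2 * n),
    if μ < ν then ‖Matrix.trace (ρ * (majorana n μ * majorana n ν))‖ ^ 2 else 0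

/-!
Write `T μ ν = Tr(ρ c_μ c_ν)`. Since `d_j` is a combination of `c_{2j}` and `c_{2j+1}`, every entry
of `D` is a combination of four values of `T`, and the phases `±i` cancel in `Tr(D²)`, leaving
`Tr(D²) = ¼ Σ_{μ,ν} T μ ν T ν μ`. For Hermitian `ρ`, `T ν μ` is the conjugate of `T μ ν`, so this
double sum is `Σ |T μ ν|²`; since `c_μ² = 1` and `Tr ρ = 1` its diagonal contributes `2n`, and the rest
is twice the sum over `μ < ν`. Finally `Tr D = Σ_j Tr(ρ (d_j† d_j + d_j d_j†)) = n`.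
-/

lemma tensor_mul {n : ℕ} (M N : Fin n → Matrix (Fin 2) (Fin 2) ℂ) :
    tensor M * tensor N = tensor (fun i => M i * N i) := by
  ext f g
  simp only [tensor, mul_apply, of_apply, Finset.prod_univ_sum, Fintype.piFinset_univ,
    Finset.prod_mul_distrib]

lemma tensor_one {n : ℕ} : tensor (fun _ : Fin n => (1 : Matrix (Fin 2) (Fin 2) ℂ)) = 1 := by
  ext f g
  simp [tensor, one_apply, Finset.prod_boole, funext_iff]

lemma tensor_conjTranspose {n : ℕ} (M : Fin n → Matrix (Fin 2) (Fin 2) ℂ) :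
    (tensor M)ᴴ = tensor (fun i => (M i)ᴴ) := by
  ext f g
  simp [tensor, conjTranspose_apply]

lemma σX_mul_self : σX * σX = 1 := by
  simp [σX, one_fin_two]

lemma σY_mul_self : σY * σY = 1 := by
  simp [σY, one_fin_two]

lemma σZ_mul_self : σZ * σZ = 1 := by
  simp [σZ, one_fin_two]

lemma σX_conjTranspose : σXᴴ = σX := by
  ext i j; fin_cases i <;> fin_cases j <;> simp [σX]

lemma σY_conjTranspose : σYᴴ = σY := by
  ext i j; fin_cases i <;> fin_cases j <;> simp [σY]

lemma σZ_conjTranspose : σZᴴ = σZ := by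
  ext i j; fin_cases i <;> fin_cases j <;> simp [σZ]

lemma majorana_mul_self {n : ℕ} (μ : Fin (2 * n)) : majorana n μ * majorana n μ = 1 := by
  rw [majorana, tensor_mul, ← tensor_one]
  congr 1
  ext1 i
  split_ifs <;> simp [σZ_mul_self, σX_mul_self, σY_mul_self]

lemma majorana_conjTranspose {n : ℕ} (μ : Fin (2 * n)) : (majorana n μ)ᴴ = majorana n μ := by
  rw [majorana, tensor_conjTranspose]
  congr 1
  ext1 i
  split_ifs <;> simp [σZ_conjTranspose, σX_conjTranspose, σY_conjTranspose]

lemma Finset.sum_sum_eq_sum_add_two_nsmul_sum_lt {ι M : Type*} [Fintype ι] [LinearOrder ι]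
    [AddCommMonoid M] (g : ι → ι → M) (hg : ∀ i j, g j i = g i j) :
    ∑ i, ∑ j, g i j = ∑ i, g i i + 2 • ∑ i, ∑ j, if i < j then g i j else 0 := by
  have hsplit : ∀ i j, g i j =
      ((if i = j then g i j else 0) + if i < j then g i j else 0) + if j < i then g j i else 0 := by
    intro i j
    rcases lt_trichotomy i j with h | rfl | h
    · simp [h, h.ne, h.not_gt]
    · simp
    · simp [h, h.ne', h.not_gt, hg]
  simp_rw [Finset.sum_congr rfl fun i _ => Finset.sum_congr rfl fun j _ => hsplit i j,
    Finset.sum_add_distrib, Finset.sum_ite_eq, Finset.mem_univ, if_true]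
  rw [Finset.sum_comm (f := fun i j => if j < i then g j i else 0), two_nsmul, add_assoc]

namespace Fin

def evenIdx {n : ℕ} (j : Fin n) : Fin (2 * n) := ⟨2 * j, by omega⟩

def oddIdx {n : ℕ} (j : Fin n) : Fin (2 * n) := ⟨2 * j + 1, by omega⟩

lemma sum_univ_two_mul {M : Type*} [AddCommMonoid M] {n : ℕ} (f : Fin (2 * n) → M) :
    ∑ μ, f μ = ∑ j, (f (evenIdx j) + f (oddIdx j)) := by
  rw [← (finProdFinEquiv.trans (finCongr (mul_comm n 2))).sum_comp, Fintype.sum_prod_type]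
  refine Finset.sum_congr rfl fun j _ => ?_
  rw [Fin.sum_univ_two]
  congr 2 <;> ext <;> simp [evenIdx, oddIdx, add_comm]

end Fin

section Correlations

variable {n : ℕ}

def majoranaCorr (ρ : NMat n) (μ ν : Fin (2 * n)) : ℂ :=
  trace (ρ * (majorana n μ * majorana n ν))

variable {ρ : NMat n}

lemma majoranaCorr_self (htr : trace ρ = 1) (μ : Fin (2 * n)) :
    majoranaCorr ρ μ μ = 1 := by
  rw [majoranaCorr, majorana_mul_self, mul_one, htr]

lemma star_majoranaCorr (hρ : ρ.IsHermitian) (μ ν : Fin (2 * n)) :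
    star (majoranaCorr ρ μ ν) = majoranaCorr ρ ν μ := by
  rw [majoranaCorr, ← trace_conjTranspose, conjTranspose_mul, conjTranspose_mul,
    majorana_conjTranspose, majorana_conjTranspose, hρ.eq, trace_mul_comm, majoranaCorr]

lemma majoranaCorr_mul_swap (hρ : ρ.IsHermitian) (μ ν : Fin (2 * n)) :
    majoranaCorr ρ μ ν * majoranaCorr ρ ν μ = (‖majoranaCorr ρ μ ν‖ ^ 2 : ℝ) := by
  rw [← star_majoranaCorr hρ μ ν, Complex.star_def, Complex.mul_conj']
  push_cast
  rfl

lemma norm_majoranaCorr_comm (hρ : ρ.IsHermitian) (μ ν : Fin (2 * n)) :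
    ‖majoranaCorr ρ ν μ‖ = ‖majoranaCorr ρ μ ν‖ := by
  rw [← star_majoranaCorr hρ, norm_star]

lemma dirac_eq (j : Fin n) :
    dirac n j = (2 : ℂ)⁻¹ • (majorana n j.evenIdx + I • majorana n j.oddIdx) :=
  rfl

lemma dirac_conjTranspose (j : Fin n) :
    (dirac n j)ᴴ = (2 : ℂ)⁻¹ • (majorana n j.evenIdx + (-I) • majorana n j.oddIdx) := by
  simp [dirac_eq, conjTranspose_smul, majorana_conjTranspose, neg_smul]

lemma trace_Dmat_mul_self :
    trace (Dmat n ρ * Dmat n ρ) = (∑ μ, ∑ ν, majoranaCorr ρ μ ν * majoranaCorr ρ ν μ) / 4 := by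
  have hsq : trace (Dmat n ρ * Dmat n ρ) = ∑ a, ∑ b, Dmat n ρ a b * Dmat n ρ b a := rfl
  rw [hsq, Fin.sum_univ_two_mul, Finset.sum_div]
  simp only [Fintype.sum_sum_type, Dmat, fromBlocks_apply₁₁, fromBlocks_apply₁₂,
    fromBlocks_apply₂₁, fromBlocks_apply₂₂, of_apply, Fin.sum_univ_two_mul, ← Finset.sum_add_distrib]
  refine Finset.sum_congr rfl fun j _ => ?_
  rw [Finset.sum_div]
  refine Finset.sum_congr rfl fun k _ => ?_
  simp only [dirac_conjTranspose]
  simp only [majoranaCorr, dirac_eq, Matrix.mul_add, Matrix.add_mul, Matrix.smul_mul,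
    Matrix.mul_smul, smul_add, trace_add, trace_smul, smul_eq_mul]
  ring_nf
  simp only [I_sq, I_pow_four]
  ring

lemma conjTranspose_dirac_mul_add_mul_conjTranspose (j : Fin n) :
    (dirac n j)ᴴ * dirac n j + dirac n j * (dirac n j)ᴴ = 1 := by
  rw [dirac_conjTranspose, dirac_eq]
  simp only [Matrix.mul_add, Matrix.add_mul, Matrix.smul_mul, Matrix.mul_smul, majorana_mul_self]
  match_scalars
  · linear_combination (-1 / 2 : ℂ) * I_sq
  all_goals ring

lemma trace_Dmat (htr : trace ρ = 1) : trace (Dmat n ρ) = n := by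
  have hdiag : trace (Dmat n ρ) = ∑ a, Dmat n ρ a a := rfl
  rw [hdiag]
  simp only [Fintype.sum_sum_type, Dmat, fromBlocks_apply₁₁, fromBlocks_apply₂₂, of_apply,
    ← Finset.sum_add_distrib, ← trace_add, ← Matrix.mul_add,
    conjTranspose_dirac_mul_add_mul_conjTranspose, mul_one, htr]
  simp

lemma gPurity_eq_sum_norm_sq (hρ : ρ.IsHermitian) (htr : trace ρ = 1) :
    gPurity n ρ = (∑ μ, ∑ ν, ‖majoranaCorr ρ μ ν‖ ^ 2 - 2 * n) / 2 ^ (n + 1) := by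
  rw [Finset.sum_sum_eq_sum_add_two_nsmul_sum_lt (fun μ ν => ‖majoranaCorr ρ μ ν‖ ^ 2)
    fun μ ν => by rw [norm_majoranaCorr_comm hρ]]
  simp only [majoranaCorr_self htr, norm_one, one_pow, Finset.sum_const, Finset.card_univ,
    Fintype.card_fin, nsmul_eq_mul, mul_one]
  unfold gPurity majoranaCorr
  push_cast
  ring

end Correlations

theorem gPurity_eq_fermionic_entropy_general (n : ℕ) (ρ : NMat n)
    (hρ : ρ.IsHermitian) (htr : Matrix.trace ρ = 1) :
    ((gPurity n ρ : ℝ) : ℂ) =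
        (2 * Matrix.trace (Dmat n ρ * Dmat n ρ) - (n : ℂ)) / 2 ^ n
    ∧ ((gPurity n ρ : ℝ) : ℂ) =
        ((n : ℂ) - 2 * Matrix.trace (Dmat n ρ * (1 - Dmat n ρ))) / 2 ^ n := by
  have hsum : ∑ μ, ∑ ν, majoranaCorr ρ μ ν * majoranaCorr ρ ν μ =
      ((∑ μ, ∑ ν, ‖majoranaCorr ρ μ ν‖ ^ 2 : ℝ) : ℂ) := by
    simp only [majoranaCorr_mul_swap hρ, ofReal_sum]
  have hP : (gPurity n ρ : ℂ) = (2 * trace (Dmat n ρ * Dmat n ρ) - n) / 2 ^ n := by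
    rw [gPurity_eq_sum_norm_sq hρ htr, trace_Dmat_mul_self, hsum]
    push_cast
    ring
  refine ⟨hP, ?_⟩
  rw [hP, Matrix.mul_sub, Matrix.mul_one, trace_sub, trace_Dmat htr]
  ring

/-- For a Hermitian state `ρ` with unit trace, the dynamical-Lie-algebra purity satisfies
`P₂(ρ) = (2 Tr(D²) − n)/2^n = (n − S₂(ρ))/2^n`, where `S₂(ρ) = 2 Tr(D(1 − D))`. -/
theorem gPurity_eq_fermionic_entropy (n : ℕ) (hn : 1 ≤ n) (ρ : NMat n)
    (hρ : ρ.IsHermitian) (htr : Matrix.trace ρ = 1) :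
    ((gPurity n ρ : ℝ) : ℂ) =
        (2 * Matrix.trace (Dmat n ρ * Dmat n ρ) - (n : ℂ)) / 2 ^ n
    ∧ ((gPurity n ρ : ℝ) : ℂ) =
        ((n : ℂ) - 2 * Matrix.trace (Dmat n ρ * (1 - Dmat n ρ))) / 2 ^ n :=
  gPurity_eq_fermionic_entropy_general n ρ hρ htr

end
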